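/- arXiv:1405.2894 — 3 statements merged into one kernel-verified Lean document; each statement's English description precedes it below -/
import Mathlib

section
/- Let S ∈ GF(q)^{B_s} be a uniformly random message vector with independent coordinates, and let E be a random variable. Then I(S_i; E | S_Γ) = 0 for all i ∉ Γ and all Γ ⊆ {1,...,B_s} with |Γ| ≤ g, if and only if I(S_{Γ'}; E) = 0 for all Γ' ⊆ {1,...,B_s} with |Γ'| ≤ g + 1. -/
noncomputable def pOf {Ω α : Type*} [Fintype Ω] [DecidableEq α]
    (w : Ω → ℝ) (X : Ω → α) (x : α) : ℝ :=
  ∑ ω : Ω, if X ω = x then w ω else 0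

noncomputable def entropy {Ω α : Type*} [Fintype Ω] [Fintype α] [DecidableEq α]
    (w : Ω → ℝ) (X : Ω → α) : ℝ :=
  - ∑ x : α, pOf w X x * Real.log (pOf w X x)

noncomputable def mutualInfo {Ω α β : Type*} [Fintype Ω] [Fintype α] [Fintype β]
    [DecidableEq α] [DecidableEq β] (w : Ω → ℝ) (X : Ω → α) (Y : Ω → β) : ℝ :=
  entropy w X + entropy w Y - entropy w fun ω => (X ω, Y ω)

/-- Conditional mutual information I(X;Y|Z) on a finite sample space. -/
noncomputable def condMutualInfo {Ω α β γ : Type*} [Fintype Ω] [Fintype α] [Fintype β]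
    [Fintype γ] [DecidableEq α] [DecidableEq β] [DecidableEq γ]
    (w : Ω → ℝ) (X : Ω → α) (Y : Ω → β) (Z : Ω → γ) : ℝ :=
  entropy w (fun ω => (X ω, Z ω)) + entropy w (fun ω => (Y ω, Z ω))
    - entropy w (fun ω => (X ω, Y ω, Z ω)) - entropy w Z

lemma pOf_comp {Ω α β : Type*} [Fintype Ω] [DecidableEq α] [DecidableEq β]
    (w : Ω → ℝ) (X : Ω → α) {f : α → β} (hf : Function.Injective f) (x : α) :
    pOf w (fun ω => f (X ω)) (f x) = pOf w X x := by
  unfold pOf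
  exact Finset.sum_congr rfl fun ω _ => by simp [hf.eq_iff]

lemma entropy_comp {Ω α β : Type*} [Fintype Ω] [Fintype α] [Fintype β]
    [DecidableEq α] [DecidableEq β]
    (w : Ω → ℝ) (X : Ω → α) {f : α → β} (hf : Function.Injective f) :
    entropy w (fun ω => f (X ω)) = entropy w X := by
  unfold entropy
  congr 1
  have h1 : ∑ y : β, pOf w (fun ω => f (X ω)) y * Real.log (pOf w (fun ω => f (X ω)) y)
      = ∑ y ∈ Finset.univ.image f,
          pOf w (fun ω => f (X ω)) y * Real.log (pOf w (fun ω => f (X ω)) y) := by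
    symm
    apply Finset.sum_subset (Finset.subset_univ _)
    intro y _ hy
    have h0 : pOf w (fun ω => f (X ω)) y = 0 := by
      unfold pOf
      apply Finset.sum_eq_zero
      intro ω _
      have : f (X ω) ≠ y := fun h => hy (Finset.mem_image.mpr ⟨X ω, Finset.mem_univ _, h⟩)
      simp [this]
    simp [h0]
  rw [h1, Finset.sum_image (fun a _ b _ h => hf h)]
  exact Finset.sum_congr rfl fun x _ => by rw [pOf_comp w X hf]

lemma mutualInfo_comp {Ω α β γ : Type*} [Fintype Ω] [Fintype α] [Fintype β] [Fintype γ]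
    [DecidableEq α] [DecidableEq β] [DecidableEq γ]
    (w : Ω → ℝ) (X : Ω → β) (E : Ω → α) {f : β → γ} (hf : Function.Injective f) :
    mutualInfo w (fun ω => f (X ω)) E = mutualInfo w X E := by
  unfold mutualInfo
  have h1 : entropy w (fun ω => f (X ω)) = entropy w X := entropy_comp w X hf
  have hg : Function.Injective (fun p : β × α => (f p.1, p.2)) := by
    intro p q h
    have h1' := congrArg Prod.fst h
    have h2' := congrArg Prod.snd h
    simp only at h1' h2'
    exact Prod.ext (hf h1') h2'
  have h2 := entropy_comp w (fun ω => (X ω, E ω)) hg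
  simp only at h2
  rw [h1, h2]

lemma entropy_const {Ω β : Type*} [Fintype Ω] [Fintype β] [DecidableEq β]
    (w : Ω → ℝ) (hw1 : ∑ ω : Ω, w ω = 1) (c : β) :
    entropy w (fun _ : Ω => c) = 0 := by
  unfold entropy
  have h : ∀ x : β, pOf w (fun _ : Ω => c) x * Real.log (pOf w (fun _ : Ω => c) x) = 0 := by
    intro x
    by_cases hx : c = x
    · subst hx
      have : pOf w (fun _ : Ω => c) c = 1 := by unfold pOf; simp [hw1]
      rw [this]; simp
    · have : pOf w (fun _ : Ω => c) x = 0 := by unfold pOf; simp [hx]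
      rw [this]; simp
  simp [h]

lemma mutualInfo_const {Ω α β : Type*} [Fintype Ω] [Fintype α] [Fintype β]
    [DecidableEq α] [DecidableEq β]
    (w : Ω → ℝ) (hw1 : ∑ ω : Ω, w ω = 1) (c : β) (E : Ω → α) :
    mutualInfo w (fun _ => c) E = 0 := by
  unfold mutualInfo
  have hg : Function.Injective (fun e : α => ((c, e) : β × α)) := by
    intro a b h
    exact congrArg Prod.snd h
  have h2 := entropy_comp w E hg
  rw [entropy_const w hw1 c, h2]
  ring

lemma chainRule {Ω α β γ : Type*} [Fintype Ω] [Fintype α] [Fintype β] [Fintype γ]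
    [DecidableEq α] [DecidableEq β] [DecidableEq γ]
    (w : Ω → ℝ) (X : Ω → β) (Y : Ω → γ) (E : Ω → α) :
    mutualInfo w (fun ω => (X ω, Y ω)) E
      = mutualInfo w Y E + condMutualInfo w X E Y := by
  unfold mutualInfo condMutualInfo
  have hswap : Function.Injective (fun p : γ × α => (p.2, p.1)) := by
    intro p q h
    have h1 := congrArg Prod.fst h
    have h2 := congrArg Prod.snd h
    simp only at h1 h2
    exact Prod.ext h2 h1
  have h1 := entropy_comp w (fun ω => (Y ω, E ω)) hswap
  simp only at h1
  have hreassoc : Function.Injective (fun p : (β × γ) × α => (p.1.1, p.2, p.1.2)) := by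
    intro p q h
    have ha := congrArg Prod.fst h
    have hb := congrArg (fun x => x.2.1) h
    have hc := congrArg (fun x => x.2.2) h
    simp only at ha hb hc
    exact Prod.ext (Prod.ext ha hc) hb
  have h2 := entropy_comp w (fun ω => ((X ω, Y ω), E ω)) hreassoc
  simp only at h2
  rw [h1, h2]
  ring

lemma keyStep {F : Type*} [Fintype F] [DecidableEq F]
    {Ω α : Type*} [Fintype Ω] [Fintype α] [DecidableEq α]
    (w : Ω → ℝ) {Bs : ℕ} (S : Ω → (Fin Bs → F)) (E : Ω → α)
    (Γ : Finset (Fin Bs)) (i : Fin Bs) (hi : i ∉ Γ) :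
    mutualInfo w (fun ω => fun j : ↥(insert i Γ) => S ω (j : Fin Bs)) E
      = mutualInfo w (fun ω => fun j : ↥Γ => S ω (j : Fin Bs)) E
        + condMutualInfo w (fun ω => S ω i) E (fun ω => fun j : ↥Γ => S ω (j : Fin Bs)) := by
  rw [← chainRule]
  have hf : Function.Injective
      (fun v : (↥(insert i Γ) → F) =>
        ((v ⟨i, Finset.mem_insert_self i Γ⟩ : F),
          fun j : ↥Γ => v ⟨(j : Fin Bs), Finset.mem_insert_of_mem j.2⟩)) := by
    intro v v' h
    have h1 := congrArg Prod.fst h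
    have h2 := congrArg Prod.snd h
    simp only at h1 h2
    funext j
    obtain ⟨j, hj⟩ := j
    rcases Finset.mem_insert.mp hj with rfl | hjΓ
    · exact h1
    · exact congrFun h2 ⟨j, hjΓ⟩
  have hm := mutualInfo_comp w (fun ω => fun j : ↥(insert i Γ) => S ω (j : Fin Bs)) E hf
  simp only at hm
  exact hm.symm

/-- For i.i.d. uniform message coordinates, weak secrecy against g guesses
    (I(S_i; E | S_Γ) = 0 for all |Γ| ≤ g, i ∉ Γ) is equivalent to
    (g+1)-block security (I(S_{Γ'}; E) = 0 for all |Γ'| ≤ g+1). -/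
theorem guesses_iff_block_security (F : Type*) [Fintype F] [DecidableEq F]
    (Ω α : Type*) [Fintype Ω] [Fintype α] [DecidableEq α]
    (w : Ω → ℝ) (hw0 : ∀ ω, 0 ≤ w ω) (hw1 : ∑ ω : Ω, w ω = 1)
    (Bs g : ℕ) (S : Ω → (Fin Bs → F)) (E : Ω → α)
    (hunif : ∀ s : Fin Bs → F, pOf w S s = 1 / (Fintype.card F : ℝ) ^ Bs) :
    (∀ Γ : Finset (Fin Bs), Γ.card ≤ g → ∀ i ∉ Γ,
        condMutualInfo w (fun ω => S ω i) E (fun ω => fun j : ↥Γ => S ω (j : Fin Bs)) = 0)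
      ↔ (∀ Γ' : Finset (Fin Bs), Γ'.card ≤ g + 1 →
        mutualInfo w (fun ω => fun j : ↥Γ' => S ω (j : Fin Bs)) E = 0) := by
  constructor
  · intro h Γ'
    induction Γ' using Finset.strongInduction with
    | _ Γ' ih =>
      intro hcard
      rcases Γ'.eq_empty_or_nonempty with rfl | ⟨i, hi⟩
      · have hiE : IsEmpty (↥(∅ : Finset (Fin Bs))) := Finset.isEmpty_coe_sort.mpr rfl
        have hX : (fun ω => fun j : ↥(∅ : Finset (Fin Bs)) => S ω (j : Fin Bs))
            = fun _ : Ω => (fun j : ↥(∅ : Finset (Fin Bs)) => hiE.elim j) := by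
          funext ω
          exact funext fun j => hiE.elim j
        rw [hX]
        exact mutualInfo_const w hw1 _ E
      · have hcarde := Finset.card_erase_of_mem hi
        have hpos := Finset.card_pos.mpr ⟨i, hi⟩
        rw [← Finset.insert_erase hi,
          keyStep w S E (Γ'.erase i) i (Finset.notMem_erase i Γ')]
        have h1 := ih (Γ'.erase i) (Finset.erase_ssubset hi) (by omega)
        have h2 := h (Γ'.erase i) (by omega) i (Finset.notMem_erase i Γ')
        rw [h1, h2]
        ring
  · intro h Γ hΓ i hi
    have hk := keyStep w S E Γ i hi
    have h1 := h (insert i Γ) (by rw [Finset.card_insert_of_notMem hi]; omega)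
    have h2 := h Γ (by omega)
    rw [h1, h2] at hk
    linarith
end

section
/- Let H ∈ GF(q)^{B_s × B}, G ∈ GF(q)^{μ × B}, and let X be uniform on GF(q)^B with S = HX and E = GX. For any Γ' ⊆ {1,...,B_s} with |Γ'| ≤ B − μ, the mutual information satisfies I(S_{Γ'}; E) = (rank H_{Γ'} + rank G − rank [H_{Γ'}; G]) · log q. -/
/-! Under the uniform distribution every fiber of a linear map `L` is a coset of `ker L`, so `L x`
is uniform on `range L` and its entropy is `dim (range L) · log q`. The pair `(H_Γ' x, G x)` is
the image of `x` under the stacked matrix `[H_Γ'; G]`, so the three entropies in `I(S_Γ'; E)` are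
the three ranks times `log q`. -/

section Entropy

variable {Ω α : Type*} [Fintype Ω] [Fintype α] [DecidableEq α]

theorem entropy_eq_neg_sum_log_pOf (w : Ω → ℝ) (X : Ω → α) :
    entropy w X = -∑ ω, w ω * Real.log (pOf w X (X ω)) := by
  unfold entropy
  congr 1
  simp only [pOf, Finset.sum_mul, ite_mul, zero_mul]
  rw [Finset.sum_comm]
  refine Finset.sum_congr rfl fun ω _ => ?_
  simp

theorem entropy_comp_injective {β : Type*} [Fintype β] [DecidableEq β] (w : Ω → ℝ) (X : Ω → α)
    {e : α → β} (he : Function.Injective e) :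
    entropy w (fun ω => e (X ω)) = entropy w X := by
  simp only [entropy_eq_neg_sum_log_pOf, pOf, he.eq_iff]

end Entropy

theorem pOf_const {Ω α : Type*} [Fintype Ω] [DecidableEq α] (c : ℝ) (X : Ω → α) (a : α) :
    pOf (fun _ => c) X a = Nat.card {ω // X ω = a} * c := by
  rw [pOf, ← Finset.sum_filter, Finset.sum_const, nsmul_eq_mul, Nat.card_eq_fintype_card,
    Fintype.card_subtype]

theorem LinearMap.natCard_fiber_eq_natCard_ker {R M N : Type*} [Semiring R] [AddCommGroup M]
    [Module R M] [AddCommGroup N] [Module R N] (L : M →ₗ[R] N) (x₀ : M) :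
    Nat.card {x // L x = L x₀} = Nat.card (LinearMap.ker L) :=
  Nat.card_congr <| Equiv.subtypeEquiv (p := fun x => L x = L x₀) (q := (· ∈ LinearMap.ker L))
    (Equiv.subRight x₀) fun x => by simp [sub_eq_zero]

section Linear

variable {F M N : Type*} [Field F] [Fintype F] [AddCommGroup M] [Module F M] [Fintype M]
  [AddCommGroup N] [Module F N]

theorem pOf_uniform_linearMap [DecidableEq N] (L : M →ₗ[F] N) (x₀ : M) :
    pOf (fun _ => 1 / (Fintype.card M : ℝ)) L (L x₀)
      = ((Fintype.card F : ℝ) ^ Module.finrank F (LinearMap.range L))⁻¹ := by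
  classical
  have hq : (Fintype.card F : ℝ) ≠ 0 := by positivity
  rw [pOf_const, L.natCard_fiber_eq_natCard_ker, Nat.card_eq_fintype_card,
    Module.card_eq_pow_finrank (K := F) (V := M), Module.card_eq_pow_finrank (K := F) (V := L.ker),
    ← LinearMap.finrank_range_add_finrank_ker L]
  push_cast
  rw [pow_add]
  field_simp

theorem entropy_uniform_linearMap [Fintype N] [DecidableEq N] (L : M →ₗ[F] N) :
    entropy (fun _ => 1 / (Fintype.card M : ℝ)) L
      = Module.finrank F (LinearMap.range L) * Real.log (Fintype.card F) := by
  have hM : (Fintype.card M : ℝ) ≠ 0 := by positivity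
  simp only [entropy_eq_neg_sum_log_pOf, pOf_uniform_linearMap, Real.log_inv, Real.log_pow,
    Finset.sum_const, Finset.card_univ, nsmul_eq_mul]
  field_simp

end Linear

theorem entropy_uniform_mulVec {F m n : Type*} [Field F] [Fintype F] [DecidableEq F]
    [Fintype m] [DecidableEq m] [Fintype n] [DecidableEq n] (A : Matrix m n F) :
    entropy (fun _ => 1 / (Fintype.card (n → F) : ℝ)) A.mulVec
      = A.rank * Real.log (Fintype.card F) :=
  entropy_uniform_linearMap A.mulVecLin

theorem mutualInfo_rank_formula_general (F : Type*) [Field F] [Fintype F] [DecidableEq F]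
    (Bs B μ : ℕ) (H : Matrix (Fin Bs) (Fin B) F) (G : Matrix (Fin μ) (Fin B) F)
    (Γ' : Finset (Fin Bs)) :
    mutualInfo (fun _ : Fin B → F => (1 : ℝ) / (Fintype.card F) ^ B)
        (fun x => (H.submatrix (fun i : ↥Γ' => (i : Fin Bs)) id).mulVec x)
        (fun x => G.mulVec x)
      = (((H.submatrix (fun i : ↥Γ' => (i : Fin Bs)) id).rank : ℝ) + (G.rank : ℝ)
          - ((Matrix.fromRows (H.submatrix (fun i : ↥Γ' => (i : Fin Bs)) id) G).rank : ℝ))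
        * Real.log (Fintype.card F) := by
  set A := H.submatrix (fun i : ↥Γ' => (i : Fin Bs)) id
  have hw : (fun _ : Fin B → F => (1 : ℝ) / (Fintype.card F) ^ B)
      = fun _ => 1 / (Fintype.card (Fin B → F) : ℝ) := by
    simp
  have hjoint : (fun x : Fin B → F => (A.mulVec x, G.mulVec x))
      = fun x => Equiv.sumArrowEquivProdArrow _ _ F ((A.fromRows G).mulVec x) := by
    ext x <;> simp [Matrix.fromRows_mulVec]
  rw [mutualInfo, hw, hjoint, entropy_comp_injective _ _ (Equiv.injective _),
    entropy_uniform_mulVec, entropy_uniform_mulVec, entropy_uniform_mulVec]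
  ring

/-- Rank formula for mutual information leaked to an eavesdropper under coset coding:
    for X uniform on GF(q)^B, S = HX, E = GX, and any Γ' with |Γ'| ≤ B - μ,
    I(S_{Γ'}; E) = (rank H_{Γ'} + rank G - rank [H_{Γ'}; G]) · log q. -/
theorem mutualInfo_rank_formula (F : Type*) [Field F] [Fintype F] [DecidableEq F]
    (Bs B μ : ℕ) (H : Matrix (Fin Bs) (Fin B) F) (G : Matrix (Fin μ) (Fin B) F)
    (Γ' : Finset (Fin Bs)) (hΓ : Γ'.card ≤ B - μ) :
    mutualInfo (fun _ : Fin B → F => (1 : ℝ) / (Fintype.card F) ^ B)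
        (fun x => (H.submatrix (fun i : ↥Γ' => (i : Fin Bs)) id).mulVec x)
        (fun x => G.mulVec x)
      = (((H.submatrix (fun i : ↥Γ' => (i : Fin Bs)) id).rank : ℝ) + (G.rank : ℝ)
          - ((Matrix.fromRows (H.submatrix (fun i : ↥Γ' => (i : Fin Bs)) id) G).rank : ℝ))
        * Real.log (Fintype.card F) :=
  mutualInfo_rank_formula_general F Bs B μ H G Γ'
end

section
/- For the product-matrix MBR code with k ≥ 2, each node generator matrix G_e contains a row of Hamming weight k; consequently, there exist k indices i_1, ..., i_k and nonzero coefficients c_1, ..., c_k such that the eavesdropper observing node e learns the value of c_1 X_{i_1} + ... + c_k X_{i_k}, so the code is not weakly secure against k - 1 guesses without an outer code. -/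
/-- The space of d × d symmetric matrices over F whose lower-right
    (d-k) × (d-k) block is zero (the product-matrix MBR message matrices). -/
def mbrSpace (F : Type*) [Field F] (d k : ℕ) :
    Submodule F (Matrix (Fin d) (Fin d) F) where
  carrier := {M | (∀ i j, M i j = M j i) ∧
      ∀ i j : Fin d, k ≤ (i : ℕ) → k ≤ (j : ℕ) → M i j = 0}
  add_mem' := by
    intro a b ha hb
    refine ⟨fun i j => ?_, fun i j hi hj => ?_⟩
    · simp [Matrix.add_apply, ha.1 i j, hb.1 i j]
    · simp [Matrix.add_apply, ha.2 i j hi hj, hb.2 i j hi hj]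
  zero_mem' := ⟨fun i j => rfl, fun i j _ _ => rfl⟩
  smul_mem' := by
    intro c a ha
    refine ⟨fun i j => ?_, fun i j hi hj => ?_⟩
    · simp [Matrix.smul_apply, ha.1 i j]
    · simp [Matrix.smul_apply, ha.2 i j hi hj]


/-- Each node of the product-matrix MBR code (k ≥ 2) stores a symbol that is a
    linear combination, with nonzero coefficients, of exactly k distinct message
    entries: a row of the node generator matrix G_e has Hamming weight k. Hence
    the code is not weakly secure against k - 1 guesses without an outer code. -/
theorem node_has_weight_k_row (F : Type*) [Field F] (d k : ℕ) (hk : 2 ≤ k) (hkd : k ≤ d)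
    (ψ : Fin d → F) (hψ : ∀ i, ψ i ≠ 0) :
    ∃ (j : Fin d) (c : Fin k → F) (idx : Fin k → Fin d × Fin d),
      (∀ t, c t ≠ 0) ∧ Function.Injective idx ∧
      ∀ M ∈ mbrSpace F d k,
        (∑ i : Fin d, ψ i * M i j) = ∑ t : Fin k, c t * M (idx t).1 (idx t).2 := by
  rcases eq_or_lt_of_le hkd with heq | hlt
  · subst heq
    refine ⟨⟨0, by omega⟩, fun t => ψ t, fun t => (t, ⟨0, by omega⟩), fun t => hψ t,
      fun a b h => (Prod.mk.injEq ..).mp h |>.1, fun M _ => rfl⟩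
  · refine ⟨⟨k, hlt⟩, fun t => ψ (Fin.castLE hkd t), fun t => (Fin.castLE hkd t, ⟨k, hlt⟩),
      fun t => hψ _, ?_, ?_⟩
    · intro a b h
      exact Fin.castLE_injective hkd ((Prod.mk.injEq ..).mp h).1
    · intro M hM
      set f : ℕ → F := fun n => if h : n < d then ψ ⟨n, h⟩ * M ⟨n, h⟩ ⟨k, hlt⟩ else 0 with hf
      have h1 : (∑ i : Fin d, ψ i * M i ⟨k, hlt⟩) = ∑ i ∈ Finset.range d, f i := by
        rw [← Fin.sum_univ_eq_sum_range]
        exact Finset.sum_congr rfl fun i _ => by simp [hf, i.isLt]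
      have h2 : (∑ i ∈ Finset.range d, f i) = ∑ i ∈ Finset.range k, f i := by
        refine (Finset.sum_subset (Finset.range_subset_range.2 hkd) ?_).symm
        intro x hx hnx
        simp only [Finset.mem_range] at hx hnx
        simp only [hf, dif_pos hx]
        rw [hM.2 ⟨x, hx⟩ ⟨k, hlt⟩ (by simpa using hnx) le_rfl, mul_zero]
      rw [h1, h2, ← Fin.sum_univ_eq_sum_range]
      exact Finset.sum_congr rfl fun t _ => by
        simp only [hf, dif_pos (lt_of_lt_of_le t.isLt hkd)]
        rfl
end
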